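/- arXiv:2011.14989 — 4 statements merged into one kernel-verified Lean document; each statement's English description precedes it below -/
import Mathlib

section
/- Two patterns π₁ and π₂ are compatible if and only if at least one of them is a variable, or both are equal atoms, or both are composite patterns of the same length n such that for every i ≤ n the i-th component of π₁ is compatible with the i-th component of π₂. -/
/-- Terms: patterns without variables. -/
inductive Tm : Type where
  | atom : ℕ → Tm
  | comp : List Tm → Tm

/-- Patterns: atoms, variables, or composites. -/
inductive Pattern : Type where
  | atom : ℕ → Pattern
  | var : ℕ → Pattern
  | comp : List Pattern → Pattern

/-- A term matches a pattern. -/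
inductive Matches : Tm → Pattern → Prop where
  | var (t : Tm) (v : ℕ) : Matches t (.var v)
  | atom (a : ℕ) : Matches (.atom a) (.atom a)
  | comp (ts : List Tm) (ps : List Pattern)
      (hlen : ts.length = ps.length)
      (h : ∀ (i : ℕ) (h1 : i < ts.length) (h2 : i < ps.length), Matches ts[i] ps[i]) :
      Matches (.comp ts) (.comp ps)


def Pattern.toTm : Pattern → Tm
  | .atom a => .atom a
  | .var _ => .atom 0
  | .comp ps => .comp (ps.attach.map fun ⟨p, _⟩ => p.toTm)

theorem matches_toTm (p : Pattern) : Matches p.toTm p := by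
  induction p using Pattern.toTm.induct with
  | case1 a => rw [Pattern.toTm]; exact .atom a
  | case2 v => exact .var _ v
  | case3 ps ih =>
    rw [Pattern.toTm]
    refine .comp _ _ (by simp) ?_
    intro i h1 h2
    simp only [List.getElem_map, List.getElem_attach]
    exact ih ps[i] (by simp)

/-- Two patterns are compatible if some term matches both. -/
def Compatible (p q : Pattern) : Prop := ∃ t : Tm, Matches t p ∧ Matches t q

/-- Two patterns are compatible iff at least one is a variable, or both are the same
atom, or both are composites of the same length whose components are pairwise
compatible. -/
theorem compatible_iff (p q : Pattern) :
    Compatible p q ↔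
      ((∃ v, p = .var v) ∨ (∃ v, q = .var v) ∨
       (∃ a, p = .atom a ∧ q = .atom a) ∨
       (∃ l₁ l₂ : List Pattern, p = .comp l₁ ∧ q = .comp l₂ ∧
         l₁.length = l₂.length ∧
         ∀ (i : ℕ) (h1 : i < l₁.length) (h2 : i < l₂.length), Compatible l₁[i] l₂[i])) := by
  constructor
  · rintro ⟨t, h1, h2⟩
    cases p with
    | var v => exact Or.inl ⟨v, rfl⟩
    | atom a =>
      cases h1
      cases q with
      | var w => exact Or.inr (Or.inl ⟨w, rfl⟩)
      | atom b => cases h2; exact Or.inr (Or.inr (Or.inl ⟨a, rfl, rfl⟩))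
      | comp l => cases h2
    | comp l₁ =>
      cases h1 with
      | comp ts _ hlen1 hm1 =>
        cases q with
        | var w => exact Or.inr (Or.inl ⟨w, rfl⟩)
        | atom b => cases h2
        | comp l₂ =>
          cases h2 with
          | comp _ _ hlen2 hm2 =>
            refine Or.inr (Or.inr (Or.inr ⟨l₁, l₂, rfl, rfl, hlen1 ▸ hlen2, ?_⟩))
            intro i hi1 hi2
            exact ⟨ts[i]'(hlen1 ▸ hi1), hm1 i (hlen1 ▸ hi1) hi1, hm2 i (hlen2 ▸ hi2) hi2⟩
  · rintro (⟨v, rfl⟩ | ⟨v, rfl⟩ | ⟨a, rfl, rfl⟩ | ⟨l₁, l₂, rfl, rfl, hlen, h⟩)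
    · exact ⟨q.toTm, .var _ v, matches_toTm q⟩
    · exact ⟨p.toTm, matches_toTm p, .var _ v⟩
    · exact ⟨.atom a, .atom a, .atom a⟩
    · refine ⟨.comp (List.ofFn fun i : Fin l₁.length => (h i i.2 (hlen ▸ i.2)).choose), ?_, ?_⟩
      · refine .comp _ _ (by simp) ?_
        intro i hi1 hi2
        simp only [List.getElem_ofFn]
        exact (h i _ _).choose_spec.1
      · refine .comp _ _ (by simp [hlen]) ?_
        intro i hi1 hi2
        simp only [List.getElem_ofFn]
        exact (h i _ _).choose_spec.2
end

section
/- Let W and B be finite, disjoint sets of patterns (the 'white' computational patterns and the 'black' halting patterns). There exists a term that either matches at least three distinct patterns of W, or matches at least two distinct patterns of W and at least one pattern of B, if and only if there exist three distinct pairwise-compatible patterns in W ∪ B of which at least two belong to W (a 'triangle' of the compatibility graph with at least two white nodes). -/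
/-!
Compatibility of patterns has the Helly property for three patterns: pairwise compatible
patterns have a common instance. Since variables are matched independently of each other,
a common instance of `a`, `b`, `c` can be assembled position by position: below a variable
of `a` take the subterm matching `b` and `c`, below an atom of `a` that atom, and recurse
into composites.
So a triangle with two white nodes is exactly a term witnessing the ambiguity.
-/

theorem matches_comp_iff {s : Tm} {ps : List Pattern} :
    Matches s (.comp ps) ↔ ∃ ss, s = .comp ss ∧ List.Forall₂ Matches ss ps := by
  simp only [List.forall₂_iff_get]
  constructor
  · intro h
    cases h with
    | comp ss _ hlen h => exact ⟨ss, rfl, hlen, fun i h₁ h₂ => h i h₁ h₂⟩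
  · rintro ⟨ss, rfl, hlen, h⟩
    exact .comp ss ps hlen fun i h₁ h₂ => h i h₁ h₂

theorem List.exists_forall₂_of_forall₂_pairwise {α β : Type*} {R : α → β → Prop}
    {as bs cs : List β} {ss ts us : List α}
    (helly : ∀ a ∈ as, ∀ {b c : β} {s t u : α}, R s a → R s b → R t a → R t c →
      R u b → R u c → ∃ v, R v a ∧ R v b ∧ R v c)
    (hsa : Forall₂ R ss as) (hsb : Forall₂ R ss bs) (hta : Forall₂ R ts as)
    (htc : Forall₂ R ts cs) (hub : Forall₂ R us bs) (huc : Forall₂ R us cs) :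
    ∃ vs, Forall₂ R vs as ∧ Forall₂ R vs bs ∧ Forall₂ R vs cs := by
  induction hsa generalizing bs cs ts us with
  | nil =>
    obtain rfl := forall₂_nil_left_iff.mp hsb
    obtain rfl := forall₂_nil_right_iff.mp hta
    obtain rfl := forall₂_nil_left_iff.mp htc
    exact ⟨[], .nil, .nil, .nil⟩
  | cons hsa₀ _ ih =>
    cases hsb with | cons hsb₀ hsb =>
    cases hta with | cons hta₀ hta =>
    cases htc with | cons htc₀ htc =>
    cases hub with | cons hub₀ hub =>
    cases huc with | cons huc₀ huc =>
    obtain ⟨v, hva, hvb, hvc⟩ := helly _ mem_cons_self hsa₀ hsb₀ hta₀ htc₀ hub₀ huc₀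
    obtain ⟨vs, hvsa, hvsb, hvsc⟩ :=
      ih (fun a ha => helly a (mem_cons_of_mem _ ha)) hsb hta htc hub huc
    exact ⟨v :: vs, .cons hva hvsa, .cons hvb hvsb, .cons hvc hvsc⟩

theorem exists_matches_of_pairwise_compatible (a : Pattern) : ∀ {b c : Pattern} {s t u : Tm},
    Matches s a → Matches s b → Matches t a → Matches t c → Matches u b → Matches u c →
    ∃ v, Matches v a ∧ Matches v b ∧ Matches v c := by
  intro b c s t u hsa hsb hta htc hub huc
  match a, b, c with
  | .var _, _, _ => exact ⟨u, .var _ _, hub, huc⟩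
  | .atom _, _, _ =>
    cases hsa; cases hta
    exact ⟨_, .atom _, hsb, htc⟩
  | .comp _, .var _, _ => exact ⟨t, hta, .var _ _, htc⟩
  | .comp _, _, .var _ => exact ⟨s, hsa, hsb, .var _ _⟩
  | .comp _, .atom _, _ => cases hsa; cases hsb
  | .comp _, _, .atom _ => cases hta; cases htc
  | .comp as, .comp bs, .comp cs =>
    obtain ⟨ss, rfl, hssa⟩ := matches_comp_iff.mp hsa
    obtain ⟨ts, rfl, htsa⟩ := matches_comp_iff.mp hta
    obtain ⟨us, rfl, husb⟩ := matches_comp_iff.mp hub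
    obtain ⟨_, ⟨⟩, hssb⟩ := matches_comp_iff.mp hsb
    obtain ⟨_, ⟨⟩, htsc⟩ := matches_comp_iff.mp htc
    obtain ⟨_, ⟨⟩, husc⟩ := matches_comp_iff.mp huc
    obtain ⟨vs, hvsa, hvsb, hvsc⟩ := List.exists_forall₂_of_forall₂_pairwise
      (fun a _ => exists_matches_of_pairwise_compatible a) hssa hssb htsa htsc husb husc
    exact ⟨.comp vs, matches_comp_iff.mpr ⟨vs, rfl, hvsa⟩, matches_comp_iff.mpr ⟨vs, rfl, hvsb⟩,
      matches_comp_iff.mpr ⟨vs, rfl, hvsc⟩⟩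
termination_by sizeOf a

/-- For disjoint finite sets of 'white' (computational) patterns `W` and 'black'
(halting) patterns `B`: some term matches at least three distinct patterns of `W`, or
at least two distinct patterns of `W` together with a pattern of `B`, iff the
compatibility graph on `W ∪ B` contains a triangle (three distinct pairwise-compatible
patterns) with at least two white nodes. -/
theorem ambiguity_iff_triangle (W B : Finset Pattern) (hWB : Disjoint W B) :
    (∃ t : Tm,
        (∃ p₁ p₂ p₃, p₁ ∈ W ∧ p₂ ∈ W ∧ p₃ ∈ W ∧
          p₁ ≠ p₂ ∧ p₁ ≠ p₃ ∧ p₂ ≠ p₃ ∧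
          Matches t p₁ ∧ Matches t p₂ ∧ Matches t p₃) ∨
        (∃ p₁ p₂, p₁ ∈ W ∧ p₂ ∈ W ∧ p₁ ≠ p₂ ∧
          Matches t p₁ ∧ Matches t p₂ ∧ ∃ b ∈ B, Matches t b)) ↔
    (∃ p₁ p₂ p₃, p₁ ∈ W ∧ p₂ ∈ W ∧ (p₃ ∈ W ∨ p₃ ∈ B) ∧
      p₁ ≠ p₂ ∧ p₁ ≠ p₃ ∧ p₂ ≠ p₃ ∧
      Compatible p₁ p₂ ∧ Compatible p₁ p₃ ∧ Compatible p₂ p₃) := by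
  constructor
  · rintro ⟨t, ⟨p₁, p₂, p₃, h₁, h₂, h₃, h₁₂, h₁₃, h₂₃, m₁, m₂, m₃⟩ |
      ⟨p₁, p₂, h₁, h₂, h₁₂, m₁, m₂, b, hb, mb⟩⟩
    · exact ⟨p₁, p₂, p₃, h₁, h₂, .inl h₃, h₁₂, h₁₃, h₂₃, ⟨t, m₁, m₂⟩, ⟨t, m₁, m₃⟩, ⟨t, m₂, m₃⟩⟩
    · have white_ne_black {p} (hp : p ∈ W) : p ≠ b := fun h =>
        Finset.disjoint_left.mp hWB hp (h ▸ hb)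
      exact ⟨p₁, p₂, b, h₁, h₂, .inr hb, h₁₂, white_ne_black h₁, white_ne_black h₂,
        ⟨t, m₁, m₂⟩, ⟨t, m₁, mb⟩, ⟨t, m₂, mb⟩⟩
  · rintro ⟨p₁, p₂, p₃, h₁, h₂, h₃, h₁₂, h₁₃, h₂₃, ⟨s, hs₁, hs₂⟩, ⟨t, ht₁, ht₃⟩, ⟨u, hu₂, hu₃⟩⟩
    obtain ⟨v, m₁, m₂, m₃⟩ := exists_matches_of_pairwise_compatible p₁ hs₁ hs₂ ht₁ ht₃ hu₂ hu₃
    rcases h₃ with h₃ | h₃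
    · exact ⟨v, .inl ⟨p₁, p₂, p₃, h₁, h₂, h₃, h₁₂, h₁₃, h₂₃, m₁, m₂, m₃⟩⟩
    · exact ⟨v, .inr ⟨p₁, p₂, h₁, h₂, h₁₂, m₁, m₂, p₃, h₃, m₃⟩⟩
end

section
/- Define f : ℕ × ℕ → ℕ × ℕ by f(0, m) = (0, m) and f(k + 1, m) = (k, m + 2k + 1). Then for every n and every i ≤ n, the i-th iterate satisfies f^[i](n, 0) = (n − i, n² − (n − i)²); in particular f^[n](n, 0) = (0, n²). -/
/-- The loop body of the reversible squaring algorithm: decrement the counter and add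
`2k + 1` to the accumulator. -/
def squareStep : ℕ × ℕ → ℕ × ℕ
  | (0, m) => (0, m)
  | (k + 1, m) => (k, m + 2 * k + 1)

/-- Iterating the loop body `i ≤ n` times from `(n, 0)` yields
`(n − i, n² − (n − i)²)`; in particular `n` iterations yield `(0, n²)`. -/
theorem squareStep_iterate (n : ℕ) :
    (∀ i ≤ n, squareStep^[i] (n, 0) = (n - i, n ^ 2 - (n - i) ^ 2)) ∧
    squareStep^[n] (n, 0) = (0, n ^ 2) := by
  have h : ∀ i ≤ n, squareStep^[i] (n, 0) = (n - i, n ^ 2 - (n - i) ^ 2) := by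
    intro i hi
    induction i with
    | zero => simp
    | succ j ih =>
      have hj : j ≤ n := Nat.le_of_succ_le hi
      rw [Function.iterate_succ_apply', ih hj]
      obtain ⟨k, hk⟩ : ∃ k, n - j = k + 1 := ⟨n - (j+1), by omega⟩
      rw [hk, squareStep]
      have h1 : n - (j+1) = k := by omega
      have h2 : k + 1 ≤ n := by omega
      rw [h1]
      congr 1
      have : (k+1)^2 ≤ n^2 := Nat.pow_le_pow_left (by omega) 2
      have : k^2 ≤ n^2 := Nat.pow_le_pow_left (by omega) 2
      have e1 : (k+1)^2 = k^2 + 2*k + 1 := by ring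
      omega
  exact ⟨h, by simpa using h n le_rfl⟩
end

section
/- For all lists of rose trees ts and us: if concatMap polish ts = concatMap polish us and ts and us have the same length, then ts = us. (A forest of known size is uniquely recoverable from the concatenation of the Polish encodings of its trees.) -/
/-- Rose trees: a node carries a label and a finite list of children. -/
inductive RTree (α : Type) where
  | node : α → List (RTree α) → RTree α

/-- The Polish encoding of a rose tree:
`polish (node x ts) = (length ts, x) :: concatMap polish ts`. -/
def polish {α : Type} : RTree α → List (ℕ × α)
  | .node x ts => (ts.length, x) :: (ts.attach.map fun ⟨t, _⟩ => polish t).flatten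


/-!
Reading the encoding of a forest from the left, the first symbol `(k, x)` of the first tree
`node x cs` is followed by the encodings of `cs` and then of the remaining trees: so the encoding
of `node x cs :: ts` is `(k, x)` prepended to the encoding of the forest `cs ++ ts`. Peeling off
that symbol, induction on the length of the encoding identifies `cs ++ ts` on both sides, and the
arity `k = cs.length` tells where to split it.
-/

section

variable {α : Type}

@[simp]
theorem polish_node (x : α) (cs : List (RTree α)) :
    polish (.node x cs) = (cs.length, x) :: (cs.map polish).flatten := by
  rw [polish, ← List.attach_map_val (l := cs) (f := polish)]

theorem flatten_map_polish_node_cons (x : α) (cs ts : List (RTree α)) :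
    ((.node x cs :: ts).map polish).flatten
      = (cs.length, x) :: ((cs ++ ts).map polish).flatten := by
  simp

end

/-- A forest of known size is uniquely recoverable from the concatenation of the Polish
encodings of its trees. -/
theorem polish_forest_inj {α : Type} (ts us : List (RTree α))
    (h : (ts.map polish).flatten = (us.map polish).flatten)
    (hlen : ts.length = us.length) : ts = us := by
  induction hn : ((ts.map polish).flatten).length using Nat.strong_induction_on
    generalizing ts us with
  | h n ih =>
    match ts, us, hlen with
    | [], [], _ => rfl
    | .node x cs :: ts, .node y ds :: us, hlen =>
      rw [flatten_map_polish_node_cons, flatten_map_polish_node_cons, List.cons.injEq,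
        Prod.mk.injEq] at h
      obtain ⟨⟨hcd, rfl⟩, h⟩ := h
      have hshorter : ((cs ++ ts).map polish).flatten.length < n := by
        rw [← hn, flatten_map_polish_node_cons, List.length_cons]
        exact Nat.lt_succ_self _
      have hlen' : (cs ++ ts).length = (ds ++ us).length := by
        simp only [List.length_append, List.length_cons] at hlen ⊢
        omega
      have hforest : cs ++ ts = ds ++ us := ih _ hshorter _ _ h hlen' rfl
      obtain ⟨rfl, rfl⟩ := List.append_inj hforest hcd
      rfl
end
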